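/- Let f(t,z₀,w₀,z₁,w₁)=z₁(1−0.5z₀²)−z₀+6·tanh(3z₀−2w₀)+cos t and g(t,z₀,w₀,z₁,w₁)=w₁(1−0.5w₀²)−w₀+8·arctan(2w₀−z₀)−cos t on [0,1]×ℝ⁴ (the coupled forced Van der Pol system with parameters A₁=A₂=1, B₁=B₂=0.5, C₁=C₂=1, D₁=6, D₂=8, E₁=3, E₂=2, F₁=2, F₂=1, G₁=1, G₂=−1). Set α₁(t)=−1+t−t², α₂(t)=−3/4+t−t², β₁(t)=1−t²/2+t³/2, β₂(t)=1−t²+t³, and the shifted functions α₁⁰(t)=−5/4+t−t², α₂⁰(t)=−1+t−t², β₁⁰(t)=2−t²/2+t³/2, β₂⁰(t)=2−t²+t³. Then: α₁''(t)≥f(t,α₁⁰(t),α₂⁰(t),α₁'(t),w₁) for all t∈[0,1] and all w₁∈ℝ; α₂''(t)≥g(t,α₁⁰(t),α₂⁰(t),z₁,α₂'(t)) for all t∈[0,1] and all z₁∈ℝ; β₁''(t)≤f(t,β₁⁰(t),β₂⁰(t),β₁'(t),w₁) for all t∈[0,1] and all w₁∈ℝ; β₂''(t)≤g(t,β₁⁰(t),β₂⁰(t),z₁,β₂'(t))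 for all t∈[0,1] and all z₁∈ℝ; and αᵢ(0)=αᵢ(1), αᵢ'(0)≥αᵢ'(1), βᵢ(0)=βᵢ(1), βᵢ'(0)≤βᵢ'(1) for i=1,2. -/

import Mathlib

open Real


/-- The nonlinearity `f` of the coupled forced Van der Pol system, with the
parameter set `A₁ = 1, B₁ = 0.5, C₁ = 1, D₁ = 6, E₁ = 3, F₁ = 2, G₁ = 1`. -/
noncomputable def fVdP (t z₀ w₀ z₁ _w₁ : ℝ) : ℝ :=
  z₁ * (1 - 0.5 * z₀ ^ 2) - z₀ + 6 * Real.tanh (3 * z₀ - 2 * w₀) + Real.cos t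

/-- The nonlinearity `g` of the coupled forced Van der Pol system, with the
parameter set `A₂ = 1, B₂ = 0.5, C₂ = 1, D₂ = 8, E₂ = 2, F₂ = 1, G₂ = −1`. -/
noncomputable def gVdP (t z₀ w₀ _z₁ w₁ : ℝ) : ℝ :=
  w₁ * (1 - 0.5 * w₀ ^ 2) - w₀ + 8 * Real.arctan (2 * w₀ - z₀) - Real.cos t

/-- `α₁(t) = −1 + t − t²`. -/
noncomputable def α₁VdP : ℝ → ℝ := fun t => -1 + t - t ^ 2

/-- `α₂(t) = −3/4 + t − t²`. -/
noncomputable def α₂VdP : ℝ → ℝ := fun t => -3 / 4 + t - t ^ 2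

/-- `β₁(t) = 1 − t²/2 + t³/2`. -/
noncomputable def β₁VdP : ℝ → ℝ := fun t => 1 - t ^ 2 / 2 + t ^ 3 / 2

/-- `β₂(t) = 1 − t² + t³`. -/
noncomputable def β₂VdP : ℝ → ℝ := fun t => 1 - t ^ 2 + t ^ 3

/-- `α₁⁰(t) = −5/4 + t − t²`. -/
noncomputable def α₁0VdP : ℝ → ℝ := fun t => -5 / 4 + t - t ^ 2

/-- `α₂⁰(t) = −1 + t − t²`. -/
noncomputable def α₂0VdP : ℝ → ℝ := fun t => -1 + t - t ^ 2

/-- `β₁⁰(t) = 2 − t²/2 + t³/2`. -/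
noncomputable def β₁0VdP : ℝ → ℝ := fun t => 2 - t ^ 2 / 2 + t ^ 3 / 2

/-- `β₂⁰(t) = 2 − t² + t³`. -/
noncomputable def β₂0VdP : ℝ → ℝ := fun t => 2 - t ^ 2 + t ^ 3

lemma myExp3 : (19:ℝ) ≤ Real.exp 3 := by
  have he : (2.7182818283:ℝ) < Real.exp 1 := Real.exp_one_gt_d9
  have h : Real.exp 3 = Real.exp 1 * Real.exp 1 * Real.exp 1 := by
    rw [← Real.exp_add, ← Real.exp_add]; norm_num
  nlinarith [Real.exp_pos 1]

lemma myTanhLe {x : ℝ} (h : x ≤ -(3/2)) : Real.tanh x ≤ -(19/24) := by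
  have hB : (0:ℝ) < Real.exp x + Real.exp (-x) := by positivity
  rw [Real.tanh_eq_sinh_div_cosh, Real.sinh_eq, Real.cosh_eq, div_div_div_cancel_right₀,
    div_le_iff₀ hB]
  case hc => norm_num
  have h1 : Real.exp x * Real.exp (-x) = 1 := by rw [← Real.exp_add]; simp
  have h2 : Real.exp x * Real.exp x ≤ 1/19 := by
    rw [← Real.exp_add]
    have : Real.exp (x + x) ≤ Real.exp (-3) := Real.exp_le_exp.2 (by linarith)
    have h3 : Real.exp (-3) ≤ 1/19 := by
      rw [Real.exp_neg]
      rw [inv_le_comm₀ (Real.exp_pos 3) (by norm_num)] at *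
      · linarith [myExp3]
    linarith
  nlinarith [Real.exp_pos x, Real.exp_pos (-x)]

lemma myTanhGe {x : ℝ} (h : 2 ≤ x) : (3/4:ℝ) ≤ Real.tanh x := by
  have hB : (0:ℝ) < Real.exp x + Real.exp (-x) := by positivity
  rw [Real.tanh_eq_sinh_div_cosh, Real.sinh_eq, Real.cosh_eq, div_div_div_cancel_right₀,
    le_div_iff₀ hB]
  case hc => norm_num
  have h1 : Real.exp x * Real.exp (-x) = 1 := by rw [← Real.exp_add]; simp
  have h2 : (3:ℝ) ≤ Real.exp x := by linarith [Real.add_one_le_exp x]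
  nlinarith [Real.exp_pos x, Real.exp_pos (-x)]

lemma myArctanLeSelf {x : ℝ} (h : 0 ≤ x) : Real.arctan x ≤ x := by
  rcases eq_or_lt_of_le h with h0 | h0
  · simp [← h0]
  · have h1 : 0 < Real.arctan x := by
      rw [← Real.arctan_zero]; exact Real.arctan_strictMono h0
    have h2 := Real.lt_tan h1 (Real.arctan_lt_pi_div_two x)
    rw [Real.tan_arctan] at h2
    exact h2.le

lemma myArctanHalf : π/4 - 1/3 ≤ Real.arctan (1/2) := by
  have h := Real.arctan_add (x := 1/2) (y := 1/3) (by norm_num)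
  rw [show ((1:ℝ)/2 + 1/3)/(1 - (1/2)*(1/3)) = 1 by norm_num, Real.arctan_one] at h
  have h2 : Real.arctan (1/3) ≤ 1/3 := myArctanLeSelf (by norm_num)
  linarith

lemma myArctan169 : π/2 - π/6 ≤ Real.arctan (16/9) := by
  have hs3 : Real.sqrt 3 ≤ 16/9 := by
    nlinarith [Real.sq_sqrt (show (0:ℝ) ≤ 3 by norm_num), Real.sqrt_nonneg 3]
  have hs3' : (0:ℝ) < Real.sqrt 3 := Real.sqrt_pos.2 (by norm_num)
  have h6 : Real.arctan (1 / Real.sqrt 3) = π/6 := by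
    rw [← Real.tan_pi_div_six]
    exact Real.arctan_tan (by linarith [Real.pi_pos]) (by linarith [Real.pi_pos])
  have h916 : Real.arctan (9/16) ≤ π/6 := by
    rw [← h6]
    apply Real.arctan_strictMono.monotone
    rw [div_le_div_iff₀ (by norm_num) hs3']
    nlinarith
  have hinv := Real.arctan_inv_of_pos (show (0:ℝ) < 16/9 by norm_num)
  rw [show ((16:ℝ)/9)⁻¹ = 9/16 by norm_num] at hinv
  linarith


lemma hdα₁ (t : ℝ) : HasDerivAt α₁VdP (1 - 2*t) t := by
  have h := ((hasDerivAt_id t).const_add (-1:ℝ)).sub (hasDerivAt_pow 2 t)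
  have : (1:ℝ) - 2*t = 1 - ↑(2:ℕ) * t ^ (2-1) := by norm_num
  rw [this]
  exact h

lemma hdβ₁ (t : ℝ) : HasDerivAt β₁VdP (-t + 3*t^2/2) t := by
  have h := (((hasDerivAt_const t (1:ℝ)).sub ((hasDerivAt_pow 2 t).div_const 2)).add
    ((hasDerivAt_pow 3 t).div_const 2))
  exact h.congr_deriv (by push_cast; ring)

lemma hdβ₂ (t : ℝ) : HasDerivAt β₂VdP (-2*t + 3*t^2) t := by
  have h := (((hasDerivAt_const t (1:ℝ)).sub (hasDerivAt_pow 2 t)).add (hasDerivAt_pow 3 t))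
  exact h.congr_deriv (by push_cast; ring)

lemma hd2a (t : ℝ) : HasDerivAt (fun t : ℝ => 1 - 2*t) (-2) t := by
  have h := (hasDerivAt_const t (1:ℝ)).sub ((hasDerivAt_id t).const_mul (2:ℝ))
  exact h.congr_deriv (by norm_num)

lemma hd2b1 (t : ℝ) : HasDerivAt (fun t : ℝ => -t + 3*t^2/2) (-1 + 3*t) t := by
  have h := ((hasDerivAt_id t).neg).add (((hasDerivAt_pow 2 t).const_mul (3:ℝ)).div_const 2)
  exact h.congr_deriv (by push_cast; ring)

lemma hd2b2 (t : ℝ) : HasDerivAt (fun t : ℝ => -2*t + 3*t^2) (-2 + 6*t) t := by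
  have h := (((hasDerivAt_id t).const_mul (2:ℝ)).neg).add ((hasDerivAt_pow 2 t).const_mul (3:ℝ))
  rw [show (fun t : ℝ => -2*t + 3*t^2) = ((-fun y : ℝ => 2 * id y) + fun y => 3 * y ^ 2) by
    ext x; simp [id]]
  exact h.congr_deriv (by push_cast; ring)

lemma ineq1 {t : ℝ} (ht0 : 0 ≤ t) (ht1 : t ≤ 1) (w₁ : ℝ) :
    fVdP t (α₁0VdP t) (α₂0VdP t) (1 - 2*t) w₁ ≤ -2 := by
  simp only [fVdP, α₁0VdP, α₂0VdP]
  have harg : 3 * (-5/4 + t - t^2) - 2 * (-1 + t - t^2) ≤ -(3/2) := by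
    nlinarith [sq_nonneg (2*t - 1)]
  have hT := myTanhLe harg
  have hc := Real.cos_le_one t
  have hp1 : (-5/4 + t - t^2 : ℝ) ≤ -1 := by nlinarith [sq_nonneg (2*t - 1)]
  have hp0 : (-5/4 : ℝ) ≤ -5/4 + t - t^2 := by nlinarith [mul_nonneg ht0 (sub_nonneg.2 ht1)]
  have hfacU : (1 - 0.5 * (-5/4 + t - t^2)^2 : ℝ) ≤ 1/2 := by nlinarith [hp1]
  have hfacL : (0:ℝ) ≤ 1 - 0.5 * (-5/4 + t - t^2)^2 := by nlinarith [hp0, hp1]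
  have hprod : (1 - 2*t) * (1 - 0.5 * (-5/4 + t - t^2)^2) ≤ 1/2 := by
    nlinarith [mul_nonneg (by linarith : (0:ℝ) ≤ 2*t) hfacL, hfacU]
  nlinarith [hT, hc, hprod, hp0]

lemma ineq2 {t : ℝ} (ht0 : 0 ≤ t) (ht1 : t ≤ 1) (z₁ : ℝ) :
    gVdP t (α₁0VdP t) (α₂0VdP t) z₁ (1 - 2*t) ≤ -2 := by
  simp only [gVdP, α₁0VdP, α₂0VdP]
  have hle : 2 * (-1 + t - t^2) - (-5/4 + t - t^2) ≤ -(1/2) := by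
    nlinarith [sq_nonneg (2*t - 1)]
  have hA : Real.arctan (2 * (-1 + t - t^2) - (-5/4 + t - t^2)) ≤ -(π/4 - 1/3) := by
    have h1 := Real.arctan_strictMono.monotone hle
    have h2 : Real.arctan (-(1/2):ℝ) = - Real.arctan (1/2) := Real.arctan_neg (1/2)
    have h3 := myArctanHalf
    linarith
  have hc := Real.one_sub_sq_div_two_le_cos (x := t)
  have hπ : (3.14:ℝ) < π := Real.pi_gt_d2
  have hsq : t^2 ≤ 1 := by nlinarith
  have hq1 : (-1 + t - t^2 : ℝ) ≤ -3/4 := by nlinarith [sq_nonneg (2*t - 1)]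
  have hq0 : (-1 : ℝ) ≤ -1 + t - t^2 := by nlinarith [mul_nonneg ht0 (sub_nonneg.2 ht1)]
  have hfacU : (1 - 0.5 * (-1 + t - t^2)^2 : ℝ) ≤ 23/32 := by nlinarith [hq1]
  have hfacL : (0:ℝ) ≤ 1 - 0.5 * (-1 + t - t^2)^2 := by nlinarith [hq0, hq1]
  have hprod : (1 - 2*t) * (1 - 0.5 * (-1 + t - t^2)^2) ≤ 23/32 := by
    nlinarith [mul_nonneg (by linarith : (0:ℝ) ≤ 2*t) hfacL, hfacU]
  nlinarith [hA, hc, hπ, hprod, hq0, hsq]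

lemma ineq3 {t : ℝ} (ht0 : 0 ≤ t) (ht1 : t ≤ 1) (w₁ : ℝ) :
    -1 + 3*t ≤ fVdP t (β₁0VdP t) (β₂0VdP t) (-t + 3*t^2/2) w₁ := by
  simp only [fVdP, β₁0VdP, β₂0VdP]
  have harg : (2:ℝ) ≤ 3 * (2 - t^2/2 + t^3/2) - 2 * (2 - t^2 + t^3) := by
    nlinarith [mul_nonneg (sq_nonneg t) (sub_nonneg.2 ht1)]
  have hT := myTanhGe harg
  have hc := Real.one_sub_sq_div_two_le_cos (x := t)
  have hsq : t^2 ≤ 1 := by nlinarith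
  have hcube : t^3 ≤ t^2 := by nlinarith [mul_nonneg (sq_nonneg t) (sub_nonneg.2 ht1)]
  have hPU : (2 - t^2/2 + t^3/2 : ℝ) ≤ 2 := by linarith
  have hPL : (50/27 : ℝ) ≤ 2 - t^2/2 + t^3/2 := by
    nlinarith [mul_nonneg (sq_nonneg (3*t - 2)) (by linarith : (0:ℝ) ≤ 3*t + 1)]
  have hfacL : (-1:ℝ) ≤ 1 - 0.5 * (2 - t^2/2 + t^3/2)^2 := by nlinarith [hPU, hPL]
  have hfacU : (1 - 0.5 * (2 - t^2/2 + t^3/2)^2 : ℝ) ≤ 0 := by nlinarith [hPL]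
  have hdU : (-t + 3*t^2/2 : ℝ) ≤ 1/2 := by
    nlinarith [mul_nonneg (sub_nonneg.2 ht1) (by linarith : (0:ℝ) ≤ 1 + 3*t)]
  have hprod : -(1/2 : ℝ) ≤ (-t + 3*t^2/2) * (1 - 0.5 * (2 - t^2/2 + t^3/2)^2) := by
    nlinarith [mul_nonneg (by linarith [hdU] : (0:ℝ) ≤ 1/2 - (-t + 3*t^2/2))
      (by linarith [hfacU] : (0:ℝ) ≤ -(1 - 0.5 * (2 - t^2/2 + t^3/2)^2)), hfacL]
  nlinarith [hT, hc, hprod, hPU, hsq]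

lemma ineq4 {t : ℝ} (ht0 : 0 ≤ t) (ht1 : t ≤ 1) (z₁ : ℝ) :
    -2 + 6*t ≤ gVdP t (β₁0VdP t) (β₂0VdP t) z₁ (-2*t + 3*t^2) := by
  simp only [gVdP, β₁0VdP, β₂0VdP]
  have hle : (16/9:ℝ) ≤ 2 * (2 - t^2 + t^3) - (2 - t^2/2 + t^3/2) := by
    nlinarith [mul_nonneg (sq_nonneg (3*t - 2)) (by linarith : (0:ℝ) ≤ 3*t + 1)]
  have hA : π/2 - π/6 ≤ Real.arctan (2 * (2 - t^2 + t^3) - (2 - t^2/2 + t^3/2)) := by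
    have h1 := Real.arctan_strictMono.monotone hle
    linarith [myArctan169]
  have hc := Real.cos_le_one t
  have hπ : (3.14:ℝ) < π := Real.pi_gt_d2
  have hcube : t^3 ≤ t^2 := by nlinarith [mul_nonneg (sq_nonneg t) (sub_nonneg.2 ht1)]
  have hQU : (2 - t^2 + t^3 : ℝ) ≤ 2 := by linarith
  have hQL : (50/27 : ℝ) ≤ 2 - t^2 + t^3 := by
    nlinarith [mul_nonneg (sq_nonneg (3*t - 2)) (by linarith : (0:ℝ) ≤ 3*t + 1)]
  have hfacL : (-1:ℝ) ≤ 1 - 0.5 * (2 - t^2 + t^3)^2 := by nlinarith [hQU, hQL]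
  have hfacU : (1 - 0.5 * (2 - t^2 + t^3)^2 : ℝ) ≤ 0 := by nlinarith [hQL]
  have hdU : (-2*t + 3*t^2 : ℝ) ≤ 1 := by
    nlinarith [mul_nonneg (sub_nonneg.2 ht1) (by linarith : (0:ℝ) ≤ 1 + 3*t)]
  have hprod : (-1 : ℝ) ≤ (-2*t + 3*t^2) * (1 - 0.5 * (2 - t^2 + t^3)^2) := by
    nlinarith [mul_nonneg (by linarith [hdU] : (0:ℝ) ≤ 1 - (-2*t + 3*t^2))
      (by linarith [hfacU] : (0:ℝ) ≤ -(1 - 0.5 * (2 - t^2 + t^3)^2)), hfacL]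
  nlinarith [hA, hc, hπ, hprod, hQU, ht1]

/-- `(α₁, α₂)` and `(β₁, β₂)` are lower and upper solutions of the coupled
forced Van der Pol periodic problem, with the stated shifted functions. -/
theorem stmt_12 :
    (∀ t ∈ Set.Icc (0:ℝ) 1, ∀ w₁ : ℝ,
      fVdP t (α₁0VdP t) (α₂0VdP t) (deriv α₁VdP t) w₁ ≤ deriv (deriv α₁VdP) t) ∧
    (∀ t ∈ Set.Icc (0:ℝ) 1, ∀ z₁ : ℝ,
      gVdP t (α₁0VdP t) (α₂0VdP t) z₁ (deriv α₂VdP t) ≤ deriv (deriv α₂VdP) t) ∧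
    (∀ t ∈ Set.Icc (0:ℝ) 1, ∀ w₁ : ℝ,
      deriv (deriv β₁VdP) t ≤ fVdP t (β₁0VdP t) (β₂0VdP t) (deriv β₁VdP t) w₁) ∧
    (∀ t ∈ Set.Icc (0:ℝ) 1, ∀ z₁ : ℝ,
      deriv (deriv β₂VdP) t ≤ gVdP t (β₁0VdP t) (β₂0VdP t) z₁ (deriv β₂VdP t)) ∧
    α₁VdP 0 = α₁VdP 1 ∧ α₂VdP 0 = α₂VdP 1 ∧
    deriv α₁VdP 1 ≤ deriv α₁VdP 0 ∧ deriv α₂VdP 1 ≤ deriv α₂VdP 0 ∧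
    β₁VdP 0 = β₁VdP 1 ∧ β₂VdP 0 = β₂VdP 1 ∧
    deriv β₁VdP 0 ≤ deriv β₁VdP 1 ∧ deriv β₂VdP 0 ≤ deriv β₂VdP 1 := by
  
  have hdα₂ : ∀ t : ℝ, HasDerivAt α₂VdP (1 - 2*t) t := by
    intro t
    have h := ((hasDerivAt_id t).const_add (-3/4:ℝ)).sub (hasDerivAt_pow 2 t)
    have e : (1:ℝ) - 2*t = 1 - ↑(2:ℕ) * t ^ (2-1) := by norm_num
    rw [e]; exact h
  have e1 : deriv α₁VdP = fun t => 1 - 2*t := funext fun t => (hdα₁ t).deriv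
  have e2 : deriv α₂VdP = fun t => 1 - 2*t := funext fun t => (hdα₂ t).deriv
  have e3 : deriv β₁VdP = fun t => -t + 3*t^2/2 := funext fun t => (hdβ₁ t).deriv
  have e4 : deriv β₂VdP = fun t => -2*t + 3*t^2 := funext fun t => (hdβ₂ t).deriv
  have e1' : ∀ t : ℝ, deriv (deriv α₁VdP) t = -2 := fun t => by rw [e1]; exact (hd2a t).deriv
  have e2' : ∀ t : ℝ, deriv (deriv α₂VdP) t = -2 := fun t => by rw [e2]; exact (hd2a t).deriv
  have e3' : ∀ t : ℝ, deriv (deriv β₁VdP) t = -1 + 3*t := fun t => by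
    rw [e3]; exact (hd2b1 t).deriv
  have e4' : ∀ t : ℝ, deriv (deriv β₂VdP) t = -2 + 6*t := fun t => by
    rw [e4]; exact (hd2b2 t).deriv
  refine ⟨?_, ?_, ?_, ?_, ?_, ?_, ?_, ?_, ?_, ?_, ?_, ?_⟩
  · intro t ⟨ht0, ht1⟩ w₁
    rw [e1', e1]
    exact ineq1 ht0 ht1 w₁
  · intro t ⟨ht0, ht1⟩ z₁
    rw [e2', e2]
    exact ineq2 ht0 ht1 z₁
  · intro t ⟨ht0, ht1⟩ w₁
    rw [e3', e3]
    exact ineq3 ht0 ht1 w₁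
  · intro t ⟨ht0, ht1⟩ z₁
    rw [e4', e4]
    exact ineq4 ht0 ht1 z₁
  · norm_num [α₁VdP]
  · norm_num [α₂VdP]
  · rw [e1]; norm_num
  · rw [e2]; norm_num
  · norm_num [β₁VdP]
  · norm_num [β₂VdP]
  · rw [e3]; norm_num
  · rw [e4]; norm_num
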